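/- Let σ > 1. There exists a constant c′ ≥ 1, depending only on σ, with the following property: for every q > 0, every K ≥ 0 and every α with 1/2 ≤ α < 1, setting s_j = α + (1−α)/(j+1) and a_j = s_j/(s_j − s_{j+1}) for j ≥ 0, the infinite product Π_{j=0}^{∞} (K · a_j · σ^j · q + 1)^{2/(σ^j q)} converges and is at most ((c′·(K q + 1))/(1−α))^{2σ/((σ−1) q)}. -/

import Mathlib

/-!
Since `s j - s (j + 1) = (1 - α) / ((j + 1) (j + 2))` and `s j ≤ 1`, the iteration constant
satisfies `1 ≤ a j ≤ (j + 2)² / (1 - α)`. As `a j σ^j ≥ 1`, the `j`-th base is at most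
`(K q + 1) a j σ^j`, so the logarithm of the `j`-th factor is at most
`2 / (σ^j q) · (log ((K q + 1) / (1 - α)) + 2 log (j + 2) + j log σ)`. Summing, the geometric
weights `σ^(-j)` contribute `σ / (σ - 1)`, and the `α`-, `K`-, `q`-independent series
`U = ∑ (2 log (j + 2) + j log σ) σ^(-j)` is absorbed into `c' = exp ((σ - 1) / σ · U)`.
-/

open Real

theorem multipliable_rpow_and_tprod_le_exp_tsum {ι : Type*} {b e w : ι → ℝ}
    (hb : ∀ i, 1 ≤ b i) (he : ∀ i, 0 ≤ e i) (hw : Summable w)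
    (hle : ∀ i, e i * log (b i) ≤ w i) :
    Multipliable (fun i => b i ^ e i) ∧ ∏' i, b i ^ e i ≤ exp (∑' i, w i) := by
  have hexp : (fun i => b i ^ e i) = exp ∘ fun i => e i * log (b i) := by
    ext i
    rw [Function.comp_apply, rpow_def_of_pos (by linarith [hb i]), mul_comm]
  have hsum : Summable fun i => e i * log (b i) :=
    hw.of_nonneg_of_le (fun i => mul_nonneg (he i) (log_nonneg (hb i))) hle
  have hprod := hsum.hasSum.rexp
  rw [hexp]
  exact ⟨hprod.multipliable, hprod.tprod_eq ▸ exp_le_exp.2 (hsum.tsum_le_tsum hle hw)⟩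

theorem log_mul_add_one_le {x y : ℝ} (hx : 1 ≤ x) (hy : 0 ≤ y) :
    log (y * x + 1) ≤ log (y + 1) + log x := by
  rw [← log_mul (by positivity) (by positivity)]
  exact log_le_log (by positivity) (by nlinarith)

theorem summable_log_add_two_mul_geometric {r : ℝ} (hr₀ : 0 ≤ r) (hr₁ : r < 1) :
    Summable fun j : ℕ => log ((j : ℝ) + 2) * r ^ j := by
  have hlin : Summable fun j : ℕ => ((j : ℝ) + 1) * r ^ j := by
    have := (summable_pow_mul_geometric_of_norm_lt_one (R := ℝ) 1
      (by rwa [norm_of_nonneg hr₀])).add (summable_geometric_of_lt_one hr₀ hr₁)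
    simpa [add_mul] using this
  refine hlin.of_nonneg_of_le
    (fun j => mul_nonneg (log_nonneg (by linarith [(Nat.cast_nonneg j : (0 : ℝ) ≤ j)]))
      (pow_nonneg hr₀ j)) fun j => ?_
  have := log_le_sub_one_of_pos (x := (j : ℝ) + 2) (by positivity)
  exact mul_le_mul_of_nonneg_right (by linarith) (by positivity)

theorem log_mul_mul_pow_add_one_le {K A σ q : ℝ} (hK : 0 ≤ K) (hq : 0 ≤ q) (hA : 1 ≤ A)
    (hσ : 1 ≤ σ) (j : ℕ) :
    log (K * A * σ ^ j * q + 1) ≤ log (K * q + 1) + log A + j * log σ := by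
  have hAσ : 1 ≤ A * σ ^ j := one_le_mul_of_one_le_of_one_le hA (one_le_pow₀ hσ)
  calc log (K * A * σ ^ j * q + 1) = log (K * q * (A * σ ^ j) + 1) := by ring_nf
    _ ≤ log (K * q + 1) + log (A * σ ^ j) := log_mul_add_one_le hAσ (by positivity)
    _ = log (K * q + 1) + log A + j * log σ := by
        rw [log_mul (by positivity) (by positivity), log_pow]
        ring

theorem two_mul_log_add_two_add_mul_log_nonneg {σ : ℝ} (hσ : 1 ≤ σ) (j : ℕ) :
    0 ≤ 2 * log ((j : ℝ) + 2) + j * log σ := by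
  have := log_nonneg (by linarith [(Nat.cast_nonneg j : (0 : ℝ) ≤ j)] : (1 : ℝ) ≤ j + 2)
  have := log_nonneg hσ
  positivity

theorem summable_two_log_add_mul_log_mul_geometric {σ : ℝ} (hσ : 1 < σ) :
    Summable fun j : ℕ => (2 * log ((j : ℝ) + 2) + j * log σ) * σ⁻¹ ^ j := by
  have hr₀ : 0 ≤ σ⁻¹ := by positivity
  have hr₁ : σ⁻¹ < 1 := inv_lt_one_of_one_lt₀ hσ
  have hlin := summable_pow_mul_geometric_of_norm_lt_one (R := ℝ) 1 (by rwa [norm_of_nonneg hr₀])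
  refine (((summable_log_add_two_mul_geometric hr₀ hr₁).mul_left 2).add
    (hlin.mul_left (log σ))).congr fun j => ?_
  simp only [pow_one]
  ring

section IterationExponents

variable {α : ℝ} {s : ℕ → ℝ} (hs : ∀ j : ℕ, s j = α + (1 - α) / ((j : ℝ) + 1))
include hs

theorem sub_succ_eq_div_mul (j : ℕ) :
    s j - s (j + 1) = (1 - α) / (((j : ℝ) + 1) * ((j : ℝ) + 2)) := by
  rw [hs, hs]
  push_cast
  field_simp
  ring

theorem one_le_div_sub_succ (h₀ : 0 ≤ α) (h₁ : α < 1) (j : ℕ) :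
    1 ≤ s j / (s j - s (j + 1)) := by
  have hd : 0 < s j - s (j + 1) := by
    rw [sub_succ_eq_div_mul hs]
    exact div_pos (by linarith) (by positivity)
  have : 0 ≤ s (j + 1) := by rw [hs]; exact add_nonneg h₀ (div_nonneg (by linarith) (by positivity))
  rw [le_div_iff₀ hd]
  linarith

theorem div_sub_succ_le (h₁ : α < 1) (j : ℕ) :
    s j / (s j - s (j + 1)) ≤ ((j : ℝ) + 2) ^ 2 / (1 - α) := by
  have h1α : 0 < 1 - α := by linarith
  have hj : (1 : ℝ) ≤ (j : ℝ) + 1 := by linarith [(Nat.cast_nonneg j : (0 : ℝ) ≤ j)]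
  have hsj : s j ≤ 1 := by
    rw [hs]
    linarith [div_le_self h1α.le hj]
  rw [sub_succ_eq_div_mul hs, div_div_eq_mul_div]
  gcongr
  have hP : 0 ≤ ((j : ℝ) + 1) * ((j : ℝ) + 2) := by positivity
  nlinarith [mul_le_mul_of_nonneg_right hsj hP]

theorem log_mul_div_sub_succ_mul_pow_add_one_le (h₀ : 0 ≤ α) (h₁ : α < 1) {K q σ : ℝ}
    (hK : 0 ≤ K) (hq : 0 ≤ q) (hσ : 1 ≤ σ) (j : ℕ) :
    log (K * (s j / (s j - s (j + 1))) * σ ^ j * q + 1)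
      ≤ log ((K * q + 1) / (1 - α)) + (2 * log ((j : ℝ) + 2) + j * log σ) := by
  have hlog_a : log (s j / (s j - s (j + 1))) ≤ 2 * log ((j : ℝ) + 2) - log (1 - α) := by
    calc log (s j / (s j - s (j + 1)))
        ≤ log (((j : ℝ) + 2) ^ 2 / (1 - α)) :=
          log_le_log (by linarith [one_le_div_sub_succ hs h₀ h₁ j]) (div_sub_succ_le hs h₁ j)
      _ = 2 * log ((j : ℝ) + 2) - log (1 - α) := by
        rw [log_div (by positivity) (by linarith), log_pow, Nat.cast_ofNat]
  have := log_mul_mul_pow_add_one_le hK hq (one_le_div_sub_succ hs h₀ h₁ j) hσ j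
  rw [log_div (by positivity) (by linarith)]
  linarith

end IterationExponents

theorem hasSum_two_div_pow_mul_add {σ : ℝ} (hσ : 1 < σ) {v : ℕ → ℝ}
    (hv : Summable fun j => v j * σ⁻¹ ^ j) (L q : ℝ) :
    HasSum (fun j : ℕ => 2 / (σ ^ j * q) * (L + v j))
      (((σ - 1) / σ * ∑' j, v j * σ⁻¹ ^ j + L) * (2 * σ / ((σ - 1) * q))) := by
  have hgeom := hasSum_geometric_of_lt_one (by positivity) (inv_lt_one_of_one_lt₀ hσ)
  have hsummand : (fun j : ℕ => 2 / (σ ^ j * q) * (L + v j))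
      = fun j => 2 / q * (L * σ⁻¹ ^ j + v j * σ⁻¹ ^ j) := by
    ext j
    rw [inv_pow]
    ring
  have hvalue : ((σ - 1) / σ * ∑' j, v j * σ⁻¹ ^ j + L) * (2 * σ / ((σ - 1) * q))
      = 2 / q * (L * (1 - σ⁻¹)⁻¹ + ∑' j, v j * σ⁻¹ ^ j) := by
    have : σ - 1 ≠ 0 := by linarith
    field_simp
    ring
  rw [hsummand, hvalue]
  exact ((hgeom.mul_left L).add hv.hasSum).mul_left (2 / q)

/-- The estimate of the product of iteration constants in case (a) of Lemma 2:
the constant `c'` depends only on `σ`. -/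
theorem product_estimate_neg (σ : ℝ) (hσ : 1 < σ) :
    ∃ c' : ℝ, 1 ≤ c' ∧
      ∀ q K α : ℝ, 0 < q → 0 ≤ K → 1/2 ≤ α → α < 1 →
      ∀ s a : ℕ → ℝ,
        (∀ j : ℕ, s j = α + (1 - α) / ((j : ℝ) + 1)) →
        (∀ j : ℕ, a j = s j / (s j - s (j + 1))) →
        Multipliable (fun j : ℕ => (K * a j * σ ^ j * q + 1) ^ (2 / (σ ^ j * q))) ∧
        (∏' j : ℕ, (K * a j * σ ^ j * q + 1) ^ (2 / (σ ^ j * q)))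
          ≤ (c' * (K * q + 1) / (1 - α)) ^ (2 * σ / ((σ - 1) * q)) := by
  set U := ∑' j : ℕ, (2 * log ((j : ℝ) + 2) + j * log σ) * σ⁻¹ ^ j
  have hU : 0 ≤ U := tsum_nonneg fun j =>
    mul_nonneg (two_mul_log_add_two_add_mul_log_nonneg hσ.le j) (by positivity)
  refine ⟨exp ((σ - 1) / σ * U),
    one_le_exp (mul_nonneg (div_nonneg (by linarith) (by linarith)) hU), ?_⟩
  intro q K α hq hK hα hα1 s a hs ha
  have ha₁ : ∀ j, 1 ≤ a j := fun j => ha j ▸ one_le_div_sub_succ hs (by linarith) hα1 j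
  have hS := hasSum_two_div_pow_mul_add hσ (summable_two_log_add_mul_log_mul_geometric hσ)
    (log ((K * q + 1) / (1 - α))) q
  obtain ⟨hmul, hprod⟩ := multipliable_rpow_and_tprod_le_exp_tsum
    (b := fun j => K * a j * σ ^ j * q + 1) (e := fun j => 2 / (σ ^ j * q))
    (fun j => le_add_of_nonneg_left (by have := ha₁ j; positivity)) (fun j => by positivity)
    hS.summable fun j => mul_le_mul_of_nonneg_left
      (ha j ▸ log_mul_div_sub_succ_mul_pow_add_one_le hs (by linarith) hα1 hK hq.le hσ.le j)
      (by positivity)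
  refine ⟨hmul, hprod.trans_eq ?_⟩
  rw [hS.tsum_eq, rpow_def_of_pos (by positivity), mul_div_assoc (exp _),
    log_mul (exp_ne_zero _) (by positivity), log_exp]
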